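/- arXiv:2206.00706 — 3 statements merged into one kernel-verified Lean document; each statement's English description precedes it below -/
import Mathlib

section
/- Let Z_1,...,Z_n be i.i.d. random variables bounded from above by b for some b > 0, with E[Z_i] = p for all i. Let p̂ = (1/n)·Σ_{i=1}^n Z_i and σ̂ = (1/n)·Σ_{i=1}^n Z_i². Then for any γ ∈ (0, 1/b) and any δ ∈ (0,1), the probability that p ≥ p̂ + (ψ(−γb)/(γb²))·σ̂ + ln(1/δ)/(γn) is at most δ. -/
open MeasureTheory ProbabilityTheory
open scoped ENNReal

/-- Bernoulli KL divergence `kl(p‖q)`, with value `∞` when `q ∉ (0,1)` and `p ≠ q`. -/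
noncomputable def klBer (p q : ℝ) : ℝ≥0∞ :=
  if p = q then 0
  else if q ≤ 0 ∨ 1 ≤ q then ⊤
  else ENNReal.ofReal (p * Real.log (p / q) + (1 - p) * Real.log ((1 - p) / (1 - q)))

/-- Upper inverse of the Bernoulli KL divergence: `kl⁻¹⁺(p̂,ε) = max {p ≤ 1 : kl(p̂‖p) ≤ ε}`. -/
noncomputable def klInvUp (phat : ℝ) (ε : ℝ≥0∞) : ℝ :=
  sSup {p : ℝ | p ≤ 1 ∧ klBer phat p ≤ ε}

/-- Lower inverse of the Bernoulli KL divergence: `kl⁻¹⁻(p̂,ε) = min {p ≥ 0 : kl(p̂‖p) ≤ ε}`. -/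
noncomputable def klInvDown (phat : ℝ) (ε : ℝ≥0∞) : ℝ :=
  sInf {p : ℝ | 0 ≤ p ∧ klBer phat p ≤ ε}

open Classical in
/-- Kullback-Leibler divergence between two measures. -/
noncomputable def KLdiv {α : Type*} [MeasurableSpace α] (ρ ν : Measure α) : ℝ≥0∞ :=
  if ρ ≪ ν ∧ Integrable (fun x => Real.log ((ρ.rnDeriv ν x).toReal)) ρ then
    ENNReal.ofReal (∫ x, Real.log ((ρ.rnDeriv ν x).toReal) ∂ρ)
  else ⊤

/-- Extended-real exponential `ℝ≥0∞ → ℝ≥0∞`, with `exp ⊤ = ⊤`. -/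
noncomputable def ennExp (x : ℝ≥0∞) : ℝ≥0∞ :=
  if x = ⊤ then ⊤ else ENNReal.ofReal (Real.exp x.toReal)

/-- `ψ(u) = u - ln(1+u)`. -/
noncomputable def psiUB (u : ℝ) : ℝ := u - Real.log (1 + u)

/-- Binomial tail `Bin(n,k,p) = P[Binomial(n,p) ≤ k]`. -/
noncomputable def binCDF (n : ℕ) (k : ℝ) (p : ℝ) : ℝ :=
  ∑ i ∈ Finset.range (n + 1),
    if (i : ℝ) ≤ k then (n.choose i : ℝ) * p ^ i * (1 - p) ^ (n - i) else 0

/-- Inverse binomial tail `Bin⁻¹(n,k,δ) = max {p ≤ 1 : Bin(n,k,p) ≥ δ}`. -/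
noncomputable def binInv (n : ℕ) (k : ℝ) (δ : ℝ) : ℝ :=
  sSup {p : ℝ | p ≤ 1 ∧ δ ≤ binCDF n k p}

/-!
Write `c = ψ(-γb)/b²`. Since `ψ(u) = u² ∫₀¹ s/(1+us) ds`, the ratio `ψ(u)/u²` is nonincreasing on
`(-1, ∞)`, so `ψ(-γz) ≤ c z²` whenever `z ≤ b`, i.e. `exp(-γz - cz²) ≤ 1 - γz`. Taking
expectations, `E[exp(γ(p - Z) - cZ²)] ≤ e^{γp}(1 - γp) ≤ 1`. The event of the theorem is
contained in `{∏ᵢ exp(γ(p - Zᵢ) - cZᵢ²) ≥ 1/δ}`; by independence this product has expectation at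
most `1`, so Markov's inequality bounds the probability by `δ`.
-/

theorem one_add_mul_pos_of_mem_Icc {v s : ℝ} (hv : -1 < v) (hs : s ∈ Set.Icc (0 : ℝ) 1) :
    0 < 1 + v * s := by
  rcases le_total 0 v with h | h <;> nlinarith [hs.1, hs.2]

theorem intervalIntegrable_div_one_add_mul {v : ℝ} (hv : -1 < v) :
    IntervalIntegrable (fun s => s / (1 + v * s)) volume 0 1 := by
  refine (continuousOn_id.div (by fun_prop) fun s hs => ?_).intervalIntegrable
  rw [Set.uIcc_of_le zero_le_one] at hs
  exact (one_add_mul_pos_of_mem_Icc hv hs).ne'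

theorem psiUB_eq_sq_mul_integral {u : ℝ} (hu : -1 < u) :
    psiUB u = u ^ 2 * ∫ s in (0 : ℝ)..1, s / (1 + u * s) := by
  have hpos : ∀ s ∈ Set.uIcc (0 : ℝ) 1, 0 < 1 + u * s := by
    intro s hs
    rw [Set.uIcc_of_le zero_le_one] at hs
    exact one_add_mul_pos_of_mem_Icc hu hs
  have hderiv : ∀ s ∈ Set.uIcc (0 : ℝ) 1,
      HasDerivAt (fun s => u * s - Real.log (1 + u * s)) (u ^ 2 * (s / (1 + u * s))) s := by
    intro s hs
    have hlin := (hasDerivAt_id' s).const_mul u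
    refine (hlin.sub ((hlin.const_add 1).log (hpos s hs).ne')).congr_deriv ?_
    field_simp [(hpos s hs).ne']
    ring
  rw [← intervalIntegral.integral_const_mul,
    intervalIntegral.integral_eq_sub_of_hasDerivAt hderiv
      ((intervalIntegrable_div_one_add_mul hu).const_mul _)]
  simp [psiUB]

theorem sq_mul_psiUB_le {a u : ℝ} (ha : -1 < a) (hau : a ≤ u) :
    a ^ 2 * psiUB u ≤ u ^ 2 * psiUB a := by
  have hu : -1 < u := ha.trans_le hau
  have hmono : (∫ s in (0 : ℝ)..1, s / (1 + u * s)) ≤ ∫ s in (0 : ℝ)..1, s / (1 + a * s) :=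
    intervalIntegral.integral_mono_on zero_le_one
      (intervalIntegrable_div_one_add_mul hu) (intervalIntegrable_div_one_add_mul ha) fun s hs =>
      div_le_div_of_nonneg_left hs.1 (one_add_mul_pos_of_mem_Icc ha hs) (by nlinarith [hs.1])
  rw [psiUB_eq_sq_mul_integral hu, psiUB_eq_sq_mul_integral ha]
  calc a ^ 2 * (u ^ 2 * ∫ s in (0 : ℝ)..1, s / (1 + u * s))
      = a ^ 2 * u ^ 2 * ∫ s in (0 : ℝ)..1, s / (1 + u * s) := by ring
    _ ≤ a ^ 2 * u ^ 2 * ∫ s in (0 : ℝ)..1, s / (1 + a * s) := by gcongr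
    _ = u ^ 2 * (a ^ 2 * ∫ s in (0 : ℝ)..1, s / (1 + a * s)) := by ring

theorem psiUB_le_div_sq_mul_sq {a u : ℝ} (ha : -1 < a) (ha0 : a ≠ 0) (hau : a ≤ u) :
    psiUB u ≤ psiUB a / a ^ 2 * u ^ 2 := by
  rw [div_mul_eq_mul_div, le_div_iff₀ (by positivity), mul_comm, mul_comm _ (u ^ 2)]
  exact sq_mul_psiUB_le ha hau

theorem exp_bernstein_le {b γ z : ℝ} (hb : 0 < b) (hγ : 0 < γ) (hγb : γ * b < 1) (hz : z ≤ b)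
    (p : ℝ) :
    Real.exp (γ * (p - z) - psiUB (-(γ * b)) / b ^ 2 * z ^ 2)
      ≤ Real.exp (γ * p) * (1 - γ * z) := by
  have hpos : 0 < 1 - γ * z := by nlinarith
  have hψ := psiUB_le_div_sq_mul_sq (a := -(γ * b)) (u := -(γ * z)) (by linarith)
    (by nlinarith) (by nlinarith)
  have hc : psiUB (-(γ * b)) / (-(γ * b)) ^ 2 * (-(γ * z)) ^ 2
      = psiUB (-(γ * b)) / b ^ 2 * z ^ 2 := by
    field_simp
  rw [hc, psiUB, ← sub_eq_add_neg] at hψ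
  rw [mul_sub, sub_sub, sub_eq_add_neg, Real.exp_add]
  gcongr
  rw [← Real.le_log_iff_exp_le hpos]
  linarith

theorem pi_setOf_inv_le_prod_le {α ι : Type*} [MeasurableSpace α] [Fintype ι]
    {μ : Measure α} [IsFiniteMeasure μ] {G : α → ℝ}
    (hG0 : ∀ x, 0 ≤ G x) (hGint : Integrable G μ) (hG1 : ∫ x, G x ∂μ ≤ 1) {δ : ℝ} (hδ : 0 < δ) :
    Measure.pi (fun _ : ι => μ) {ω | 1 / δ ≤ ∏ i, G (ω i)} ≤ ENNReal.ofReal δ := by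
  set P := Measure.pi (fun _ : ι => μ)
  have hmarkov := mul_meas_ge_le_integral_of_nonneg (μ := P)
    (ae_of_all _ fun ω => Finset.prod_nonneg fun i _ => hG0 (ω i))
    (Integrable.fintype_prod (f := fun _ => G) fun _ => hGint) (1 / δ)
  have hprod : ∫ ω, ∏ i, G (ω i) ∂P ≤ 1 := by
    rw [integral_fintype_prod_eq_pow]
    exact pow_le_one₀ (integral_nonneg hG0) hG1
  rw [← ofReal_measureReal]
  gcongr
  have := hmarkov.trans hprod
  rwa [div_mul_eq_mul_div, one_mul, div_le_one hδ] at this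

theorem exp_le_prod_exp_of_mean_le {n : ℕ} (hn : 0 < n) {γ c p L : ℝ} (hγ : 0 < γ)
    {ω : Fin n → ℝ}
    (h : 1 / (n : ℝ) * ∑ i, ω i + c / γ * (1 / (n : ℝ) * ∑ i, ω i ^ 2) + L / (γ * n) ≤ p) :
    Real.exp L ≤ ∏ i, Real.exp (γ * (p - ω i) - c * ω i ^ 2) := by
  have hn' : (0 : ℝ) < n := Nat.cast_pos.mpr hn
  rw [← Real.exp_sum, Real.exp_le_exp]
  have hsum : ∑ i, (γ * (p - ω i) - c * ω i ^ 2)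
      = γ * n * p - γ * ∑ i, ω i - c * ∑ i, ω i ^ 2 := by
    simp only [Finset.sum_sub_distrib, ← Finset.mul_sum, Finset.sum_const, Finset.card_univ,
      Fintype.card_fin, nsmul_eq_mul]
    ring
  have h' := mul_le_mul_of_nonneg_left h (mul_pos hγ hn').le
  rw [hsum]
  field_simp at h'
  linarith

section Moment

variable {D : Measure ℝ} [IsProbabilityMeasure D] {b γ : ℝ}

theorem integrable_exp_bernstein (hb : 0 < b) (hγ : 0 < γ) (hγb : γ * b < 1)
    (hD : ∀ᵐ z ∂D, z ≤ b) (hint : Integrable (fun z : ℝ => z) D) (p : ℝ) :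
    Integrable (fun z => Real.exp (γ * (p - z) - psiUB (-(γ * b)) / b ^ 2 * z ^ 2)) D := by
  refine Integrable.mono' (((integrable_const 1).sub (hint.const_mul γ)).const_mul
    (Real.exp (γ * p))) (by fun_prop) ?_
  filter_upwards [hD] with z hz
  rw [Real.norm_of_nonneg (Real.exp_pos _).le]
  exact exp_bernstein_le hb hγ hγb hz p

theorem integral_exp_bernstein_le_one (hb : 0 < b) (hγ : 0 < γ) (hγb : γ * b < 1)
    (hD : ∀ᵐ z ∂D, z ≤ b) (hint : Integrable (fun z : ℝ => z) D) :
    ∫ z, Real.exp (γ * (∫ x, x ∂D - z) - psiUB (-(γ * b)) / b ^ 2 * z ^ 2) ∂D ≤ 1 := by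
  set p := ∫ x, x ∂D
  have hlin : Integrable (fun z => Real.exp (γ * p) * (1 - γ * z)) D :=
    ((integrable_const 1).sub (hint.const_mul γ)).const_mul _
  calc ∫ z, Real.exp (γ * (p - z) - psiUB (-(γ * b)) / b ^ 2 * z ^ 2) ∂D
      ≤ ∫ z, Real.exp (γ * p) * (1 - γ * z) ∂D :=
        integral_mono_ae (integrable_exp_bernstein hb hγ hγb hD hint p) hlin
          (hD.mono fun z hz => exp_bernstein_le hb hγ hγb hz p)
    _ = Real.exp (γ * p) * (1 - γ * p) := by
        rw [integral_const_mul, integral_sub (integrable_const _) (hint.const_mul γ),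
          integral_const_mul]
        simp [p]
    _ ≤ Real.exp (γ * p) * Real.exp (-(γ * p)) := by
        gcongr
        linarith [Real.add_one_le_exp (-(γ * p))]
    _ = 1 := by rw [← Real.exp_add, add_neg_cancel, Real.exp_zero]

end Moment

/-- **Unexpected Bernstein inequality.** For i.i.d. `Z_1, ..., Z_n` bounded above by `b > 0` with
mean `p`, empirical mean `p̂` and empirical second moment `σ̂`, for any `γ ∈ (0, 1/b)` and
`δ ∈ (0,1)`, `P[p ≥ p̂ + (ψ(-γb)/(γb²)) σ̂ + ln(1/δ)/(γn)] ≤ δ`. -/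
theorem unexpected_bernstein
    (n : ℕ) (hn : 0 < n) (b : ℝ) (hb : 0 < b)
    (D : Measure ℝ) [IsProbabilityMeasure D]
    (hD : ∀ᵐ z ∂D, z ≤ b) (hint : Integrable (fun z : ℝ => z) D)
    (p : ℝ) (hp : p = ∫ z, z ∂D)
    (γ : ℝ) (hγ : γ ∈ Set.Ioo 0 (1 / b))
    (δ : ℝ) (hδ : δ ∈ Set.Ioo (0 : ℝ) 1) :
    Measure.pi (fun _ : Fin n => D)
      {ω | (1 / (n : ℝ)) * ∑ i, ω i
          + (psiUB (-(γ * b)) / (γ * b ^ 2)) * ((1 / (n : ℝ)) * ∑ i, (ω i) ^ 2)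
          + Real.log (1 / δ) / (γ * n) ≤ p}
      ≤ ENNReal.ofReal δ := by
  subst hp
  obtain ⟨hγ0, hγb⟩ := hγ
  rw [lt_div_iff₀ hb] at hγb
  calc _ ≤ Measure.pi (fun _ : Fin n => D) {ω | 1 / δ ≤ ∏ i,
        Real.exp (γ * (∫ z, z ∂D - ω i) - psiUB (-(γ * b)) / b ^ 2 * ω i ^ 2)} := by
        refine measure_mono fun ω hω => ?_
        have h := exp_le_prod_exp_of_mean_le hn hγ0 (c := psiUB (-(γ * b)) / b ^ 2)
          (p := ∫ z, z ∂D) (L := Real.log (1 / δ)) (by rwa [div_div, mul_comm (b ^ 2)])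
        rwa [Real.exp_log (one_div_pos.mpr hδ.1)] at h
    _ ≤ ENNReal.ofReal δ :=
        pi_setOf_inv_le_prod_le (fun _ => (Real.exp_pos _).le)
          (integrable_exp_bernstein hb hγ0 hγb hD hint _)
          (integral_exp_bernstein_le_one hb hγ0 hγb hD hint) hδ.1
end

section
/- Let Z_1,...,Z_n be i.i.d. random variables bounded from above by b > 0, and assume Σ_{i=1}^n Z_i² is finite almost surely. Then for any γ ∈ (0, 1/b): E[exp(γ·Σ_{i=1}^n (E[Z_i] − Z_i) − (ψ(−bγ)/b²)·Σ_{i=1}^n Z_i²)] ≤ 1. -/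
open MeasureTheory ProbabilityTheory
open scoped ENNReal

/-!
The key inequality is `c² ψ(a) ≤ a² ψ(c)` for `-1 < c < 0` and `c ≤ a`: for `a < 0` compare the
power series `ψ(-v) = ∑ v^(k+2)/(k+2)` term by term, for `a ≥ 0` use `ψ(a) ≤ a²/2` and
`c²/2 ≤ ψ(c)`.
With `c = -bγ` and `a = -γz` for `z ≤ b` it reads `exp(-γz - ψ(-bγ) z²/b²) ≤ 1 - γz`, so each
factor `exp(γ(E Z - Z) - ψ(-bγ) Z²/b²)` has expectation at most `e^{γ E Z} (1 - γ E Z) ≤ 1`, and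
the coordinates are independent under the product measure.
-/

lemma hasSum_psiUB_neg {v : ℝ} (hv : |v| < 1) :
    HasSum (fun n : ℕ => v ^ (n + 2) / (n + 2)) (psiUB (-v)) := by
  have h := (hasSum_nat_add_iff' 1).2 (Real.hasSum_pow_div_log_of_abs_lt_one hv)
  have hψ : psiUB (-v) = -Real.log (1 - v) - ∑ i ∈ Finset.range 1, v ^ (i + 1) / (i + 1) := by
    simp [psiUB, sub_eq_add_neg, add_comm]
  have hterm : (fun n : ℕ => v ^ (n + 2) / (n + 2)) =
      fun n : ℕ => v ^ (n + 1 + 1) / ((n + 1 : ℕ) + 1) := by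
    ext n
    push_cast
    ring
  rw [hterm, hψ]
  exact h

lemma sq_div_two_le_psiUB {a : ℝ} (h₁ : -1 < a) (h₀ : a ≤ 0) : a ^ 2 / 2 ≤ psiUB a := by
  have ha : 0 ≤ -a := by linarith
  have hs := hasSum_psiUB_neg (v := -a) (by rw [abs_of_nonneg ha]; linarith)
  simpa using le_hasSum hs 0 fun n _ => by positivity

lemma psiUB_le_sq_div_two {a : ℝ} (ha : 0 ≤ a) : psiUB a ≤ a ^ 2 / 2 := by
  have h1a : 0 < 1 + a := by linarith
  set u := a / (1 + a) with hu
  -- `1 - u = (1 + a)⁻¹`, so the lower bound on `ψ(-u)` is a lower bound on `log (1 + a)`.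
  have hlog : Real.log (1 + -u) = -Real.log (1 + a) := by
    rw [← Real.log_inv, hu]
    congr 1
    field_simp
    ring
  have hψu := sq_div_two_le_psiUB (a := -u)
    (by rw [hu, neg_lt_neg_iff, div_lt_one h1a]; linarith) (by rw [hu, neg_nonpos]; positivity)
  have hgap : u + u ^ 2 / 2 - (a - a ^ 2 / 2) = a ^ 4 / (2 * (1 + a) ^ 2) := by
    rw [hu]
    field_simp
    ring
  have : 0 ≤ a ^ 4 / (2 * (1 + a) ^ 2) := by positivity
  unfold psiUB at hψu ⊢
  rw [hlog, neg_sq] at hψu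
  linarith

lemma sq_mul_psiUB_le_s6 {a c : ℝ} (hc₁ : -1 < c) (hc₀ : c < 0) (hca : c ≤ a) :
    c ^ 2 * psiUB a ≤ a ^ 2 * psiUB c := by
  rcases le_or_gt 0 a with ha | ha
  · calc c ^ 2 * psiUB a ≤ c ^ 2 * (a ^ 2 / 2) := by gcongr; exact psiUB_le_sq_div_two ha
      _ = a ^ 2 * (c ^ 2 / 2) := by ring
      _ ≤ a ^ 2 * psiUB c := by gcongr; exact sq_div_two_le_psiUB hc₁ hc₀.le
  · have hA := (hasSum_psiUB_neg (v := -a) (by rw [abs_of_pos (by linarith)]; linarith)).mul_left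
      (c ^ 2)
    have hC := (hasSum_psiUB_neg (v := -c) (by rw [abs_of_pos (by linarith)]; linarith)).mul_left
      (a ^ 2)
    rw [neg_neg] at hA hC
    refine hasSum_le (fun n => ?_) hA hC
    have hpow : (-a) ^ n ≤ (-c) ^ n := pow_le_pow_left₀ (by linarith) (by linarith) n
    rw [mul_div_assoc', mul_div_assoc']
    gcongr ?_ / _
    calc c ^ 2 * (-a) ^ (n + 2) = a ^ 2 * c ^ 2 * (-a) ^ n := by ring
      _ ≤ a ^ 2 * c ^ 2 * (-c) ^ n := by gcongr
      _ = a ^ 2 * (-c) ^ (n + 2) := by ring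

lemma exp_sub_psiUB_mul_sq_le_one_add {a c : ℝ} (hc₁ : -1 < c) (hc₀ : c < 0) (hca : c ≤ a) :
    Real.exp (a - psiUB c / c ^ 2 * a ^ 2) ≤ 1 + a := by
  have hψ : psiUB a ≤ psiUB c / c ^ 2 * a ^ 2 := by
    rw [div_mul_eq_mul_div, le_div_iff₀ (sq_pos_of_neg hc₀)]
    linarith [sq_mul_psiUB_le_s6 hc₁ hc₀ hca]
  calc Real.exp (a - psiUB c / c ^ 2 * a ^ 2) ≤ Real.exp (a - psiUB a) := by gcongr
    _ = 1 + a := by rw [psiUB, sub_sub_cancel, Real.exp_log (by linarith)]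

open Real in
lemma lintegral_exp_bernstein_le_one {Ω : Type*} [MeasurableSpace Ω] {P : Measure Ω}
    [IsProbabilityMeasure P] {X : Ω → ℝ} {b γ : ℝ} (hb : 0 < b) (hγ : 0 < γ) (hbγ : b * γ < 1)
    (hXb : ∀ᵐ ω ∂P, X ω ≤ b) (hX : Integrable X P) :
    ∫⁻ ω, ENNReal.ofReal (exp (γ * (P[X] - X ω) - psiUB (-(b * γ)) / b ^ 2 * X ω ^ 2)) ∂P
      ≤ 1 := by
  set m := P[X]
  have hpt : ∀ᵐ ω ∂P,
      exp (γ * (m - X ω) - psiUB (-(b * γ)) / b ^ 2 * X ω ^ 2) ≤ exp (γ * m) * (1 - γ * X ω) := by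
    filter_upwards [hXb] with ω hω
    have key := exp_sub_psiUB_mul_sq_le_one_add (a := -(γ * X ω)) (c := -(b * γ))
      (by linarith) (by nlinarith) (by nlinarith)
    calc exp (γ * (m - X ω) - psiUB (-(b * γ)) / b ^ 2 * X ω ^ 2)
        = exp (γ * m) *
            exp (-(γ * X ω) - psiUB (-(b * γ)) / (-(b * γ)) ^ 2 * (-(γ * X ω)) ^ 2) := by
          rw [← exp_add]
          congr 1
          field_simp
          ring
      _ ≤ exp (γ * m) * (1 - γ * X ω) := by
          gcongr
          linarith
  have hnonneg : ∀ᵐ ω ∂P, 0 ≤ exp (γ * m) * (1 - γ * X ω) := by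
    filter_upwards [hXb] with ω hω
    have : γ * X ω < 1 := by nlinarith
    have := exp_pos (γ * m)
    positivity
  have hint : Integrable (fun ω => exp (γ * m) * (1 - γ * X ω)) P :=
    ((integrable_const 1).sub (hX.const_mul γ)).const_mul _
  calc ∫⁻ ω, ENNReal.ofReal (exp (γ * (m - X ω) - psiUB (-(b * γ)) / b ^ 2 * X ω ^ 2)) ∂P
      ≤ ∫⁻ ω, ENNReal.ofReal (exp (γ * m) * (1 - γ * X ω)) ∂P :=
        lintegral_mono_ae (hpt.mono fun _ h => ENNReal.ofReal_le_ofReal h)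
    _ = ENNReal.ofReal (exp (γ * m) * (1 - γ * m)) := by
        rw [← ofReal_integral_eq_lintegral_ofReal hint hnonneg, integral_const_mul,
          integral_sub (integrable_const 1) (hX.const_mul γ), integral_const_mul]
        simp [m]
    _ ≤ ENNReal.ofReal (exp (γ * m) * exp (-(γ * m))) := by
        gcongr
        exact one_sub_le_exp_neg _
    _ = 1 := by rw [← exp_add, add_neg_cancel, exp_zero, ENNReal.ofReal_one]

lemma lintegral_pi_prod_eq_prod_lintegral {ι : Type*} [Fintype ι] {E : ι → Type*}
    [∀ i, MeasurableSpace (E i)] {μ : ∀ i, Measure (E i)} [∀ i, IsProbabilityMeasure (μ i)]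
    {f : ∀ i, E i → ℝ≥0∞} (hf : ∀ i, Measurable (f i)) :
    ∫⁻ x, ∏ i, f i (x i) ∂Measure.pi μ = ∏ i, ∫⁻ y, f i y ∂μ i := by
  rw [lintegral_prod_eq_prod_lintegral_of_indepFun _ _ (iIndepFun_pi fun i => (hf i).aemeasurable)
    fun i => (hf i).comp (measurable_pi_apply i)]
  exact Finset.prod_congr rfl fun i _ => (measurePreserving_eval μ i).lintegral_comp (hf i)

/-- **Unexpected Bernstein lemma.** For i.i.d. `Z_1, ..., Z_n` bounded above by `b > 0` and any
`γ ∈ (0, 1/b)`, `E[exp(γ·Σᵢ(E[Z_i] - Z_i) - (ψ(-bγ)/b²)·Σᵢ Z_i²)] ≤ 1`. -/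
theorem unexpected_bernstein_lemma
    (n : ℕ) (b : ℝ) (hb : 0 < b)
    (D : Measure ℝ) [IsProbabilityMeasure D]
    (hD : ∀ᵐ z ∂D, z ≤ b) (hint : Integrable (fun z : ℝ => z) D)
    (γ : ℝ) (hγ : γ ∈ Set.Ioo 0 (1 / b)) :
    ∫⁻ ω : Fin n → ℝ, ENNReal.ofReal (Real.exp (γ * ∑ i, ((∫ z, z ∂D) - ω i)
          - (psiUB (-(b * γ)) / b ^ 2) * ∑ i, (ω i) ^ 2))
        ∂(Measure.pi (fun _ : Fin n => D)) ≤ 1 := by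
  obtain ⟨hγ₀, hγb⟩ := hγ
  have hbγ : b * γ < 1 := by rwa [lt_div_iff₀ hb, mul_comm] at hγb
  set g : ℝ → ℝ≥0∞ := fun z => ENNReal.ofReal
    (Real.exp (γ * ((∫ z, z ∂D) - z) - psiUB (-(b * γ)) / b ^ 2 * z ^ 2))
  have hg_meas : Measurable g := by fun_prop
  have hprod (ω : Fin n → ℝ) : ENNReal.ofReal (Real.exp (γ * ∑ i, ((∫ z, z ∂D) - ω i)
      - (psiUB (-(b * γ)) / b ^ 2) * ∑ i, (ω i) ^ 2)) = ∏ i, g (ω i) := by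
    rw [← ENNReal.ofReal_prod_of_nonneg fun _ _ => (Real.exp_pos _).le, ← Real.exp_sum,
      Finset.mul_sum, Finset.mul_sum, ← Finset.sum_sub_distrib]
  calc _ = ∫⁻ ω : Fin n → ℝ, ∏ i, g (ω i) ∂(Measure.pi fun _ => D) := lintegral_congr hprod
    _ = ∏ _i : Fin n, ∫⁻ z, g z ∂D := lintegral_pi_prod_eq_prod_lintegral fun _ => hg_meas
    _ ≤ 1 := Finset.prod_le_one' fun _ _ => lintegral_exp_bernstein_le_one hb hγ₀ hbγ hD hint
end

section
/- Fix n ∈ ℕ, δ ∈ (0,1), and real numbers L̂ > 0 and C > 0 (playing the roles of E_ρ[L̂(h,S)] and KL(ρ‖π) + ln(2√n/δ)). Then the function F(λ) = L̂/(1−λ/2) + C/(λ·(1−λ/2)·n) is convex on (0,2) and attains its minimum over (0,2) at λ* = 2/(√(2·n·L̂/C + 1) + 1). -/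
open MeasureTheory ProbabilityTheory
open scoped ENNReal

/-! With `a = C/n`, partial fractions turn `F` into `λ ↦ a/λ + (2L̂ + a)/(2 - λ)`: convex as a
sum of two reciprocals, and by Titu's lemma `1/x + t²/y ≥ (1 + t)²/(x + y)` minimised where
`(2 - λ)/λ = t = √((2L̂ + a)/a) = √(2nL̂/C + 1)`. -/

open Set

lemma convexOn_div {a : ℝ} (ha : 0 ≤ a) : ConvexOn ℝ (Ioi 0) fun x : ℝ => a / x := by
  simpa [div_eq_mul_inv] using (convexOn_zpow (𝕜 := ℝ) (-1)).smul ha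

lemma convexOn_div_sub {b : ℝ} (c : ℝ) (hb : 0 ≤ b) :
    ConvexOn ℝ (Iio c) fun x : ℝ => b / (c - x) := by
  -- `AffineMap.lineMap c (c - 1)` is the reflection `x ↦ c - x`
  have hreflect := (convexOn_div hb).comp_affineMap (AffineMap.lineMap c (c - 1))
  have hpre : AffineMap.lineMap c (c - 1) ⁻¹' Ioi 0 = Iio c := by
    ext x
    simp [AffineMap.lineMap_apply_ring']
  rw [hpre] at hreflect
  refine hreflect.congr fun x _ => ?_
  simp [AffineMap.lineMap_apply_ring', neg_add_eq_sub]

lemma convexOn_div_add_div_sub {a b : ℝ} (c : ℝ) (ha : 0 ≤ a) (hb : 0 ≤ b) :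
    ConvexOn ℝ (Ioo 0 c) fun x : ℝ => a / x + b / (c - x) :=
  ((convexOn_div ha).subset Ioo_subset_Ioi_self (convex_Ioo 0 c)).add
    ((convexOn_div_sub c hb).subset Ioo_subset_Iio_self (convex_Ioo 0 c))

lemma add_sq_div_add_le (p q : ℝ) {x y : ℝ} (hx : 0 < x) (hy : 0 < y) :
    (p + q) ^ 2 / (x + y) ≤ p ^ 2 / x + q ^ 2 / y := by
  simpa [Fin.sum_univ_two] using Finset.sq_sum_div_le_sum_sq_div Finset.univ ![p, q]
    (g := ![x, y]) (by simp [Fin.forall_fin_two, hx, hy])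

lemma div_add_one_mem_Ioo {c t : ℝ} (hc : 0 < c) (ht : 0 < t) : c / (t + 1) ∈ Ioo 0 c :=
  ⟨by positivity, div_lt_self hc (by linarith)⟩

lemma isMinOn_div_add_div_sub {a b c : ℝ} (ha : 0 < a) (hb : 0 < b) (hc : 0 < c) :
    IsMinOn (fun x : ℝ => a / x + b / (c - x)) (Ioo 0 c) (c / (√(b / a) + 1)) := by
  set t := √(b / a)
  have ht : 0 < t := Real.sqrt_pos.mpr (div_pos hb ha)
  have hb_eq : b = a * t ^ 2 := by
    rw [Real.sq_sqrt (div_pos hb ha).le]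
    field_simp
  have hmin_val : a / (c / (t + 1)) + b / (c - c / (t + 1)) = a * (1 + t) ^ 2 / c := by
    have hgap : c - c / (t + 1) = c * t / (t + 1) := by
      field_simp
      ring
    rw [hgap, hb_eq]
    field_simp
    ring
  intro x hx
  have hcx : 0 < c - x := sub_pos.mpr hx.2
  calc a / (c / (t + 1)) + b / (c - c / (t + 1)) = a * ((1 + t) ^ 2 / (x + (c - x))) := by
        rw [hmin_val, add_sub_cancel]; ring
    _ ≤ a * (1 ^ 2 / x + t ^ 2 / (c - x)) :=
        mul_le_mul_of_nonneg_left (add_sq_div_add_le 1 t hx.1 hcx) ha.le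
    _ = a / x + b / (c - x) := by rw [hb_eq]; ring

lemma div_one_sub_half_add_div_eq {x : ℝ} (hx₀ : x ≠ 0) (hx₂ : x ≠ 2) (L C m : ℝ) :
    L / (1 - x / 2) + C / (x * (1 - x / 2) * m) = C / m / x + (2 * L + C / m) / (2 - x) := by
  have h : 2 - x ≠ 0 := sub_ne_zero.mpr (Ne.symm hx₂)
  rw [mul_comm _ m, ← div_div]
  field_simp
  ring

theorem pac_bayes_lambda_optimal_general
    (n : ℕ) (hn : 0 < n)
    (Lhat C : ℝ) (hL : 0 < Lhat) (hC : 0 < C) :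
    ConvexOn ℝ (Set.Ioo (0 : ℝ) 2)
        (fun lam => Lhat / (1 - lam / 2) + C / (lam * (1 - lam / 2) * n)) ∧
      2 / (Real.sqrt (2 * n * Lhat / C + 1) + 1) ∈ Set.Ioo (0 : ℝ) 2 ∧
      IsMinOn (fun lam => Lhat / (1 - lam / 2) + C / (lam * (1 - lam / 2) * n))
        (Set.Ioo (0 : ℝ) 2) (2 / (Real.sqrt (2 * n * Lhat / C + 1) + 1)) := by
  have ha : 0 < C / n := div_pos hC (Nat.cast_pos.mpr hn)
  have hratio : (2 * Lhat + C / n) / (C / n) = 2 * n * Lhat / C + 1 := by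
    field_simp
  have hF : EqOn (fun lam => Lhat / (1 - lam / 2) + C / (lam * (1 - lam / 2) * n))
      (fun x => C / n / x + (2 * Lhat + C / n) / (2 - x)) (Ioo 0 2) := fun x hx =>
    div_one_sub_half_add_div_eq hx.1.ne' hx.2.ne Lhat C n
  have hmem := div_add_one_mem_Ioo two_pos
    (Real.sqrt_pos.mpr (by positivity : 0 < 2 * n * Lhat / C + 1))
  have hmin := isMinOn_div_add_div_sub ha (by positivity : 0 < 2 * Lhat + C / n) two_pos
  rw [hratio] at hmin
  exact ⟨(convexOn_div_add_div_sub 2 ha.le (by positivity)).congr hF.symm, hmem, fun x hx =>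
    (hF hmem).trans_le ((hmin hx).trans_eq (hF hx).symm)⟩

/-- **Optimal λ for the PAC-Bayes-λ bound.** For fixed `n`, `δ ∈ (0,1)`, `L̂ > 0` and `C > 0`,
the function `F(λ) = L̂/(1-λ/2) + C/(λ(1-λ/2)n)` is convex on `(0,2)` and attains its minimum
over `(0,2)` at `λ* = 2/(√(2nL̂/C + 1) + 1)`. -/
theorem pac_bayes_lambda_optimal
    (n : ℕ) (hn : 0 < n) (δ : ℝ) (hδ : δ ∈ Set.Ioo (0 : ℝ) 1)
    (Lhat C : ℝ) (hL : 0 < Lhat) (hC : 0 < C) :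
    ConvexOn ℝ (Set.Ioo (0 : ℝ) 2)
        (fun lam => Lhat / (1 - lam / 2) + C / (lam * (1 - lam / 2) * n)) ∧
      2 / (Real.sqrt (2 * n * Lhat / C + 1) + 1) ∈ Set.Ioo (0 : ℝ) 2 ∧
      IsMinOn (fun lam => Lhat / (1 - lam / 2) + C / (lam * (1 - lam / 2) * n))
        (Set.Ioo (0 : ℝ) 2) (2 / (Real.sqrt (2 * n * Lhat / C + 1) + 1)) :=
  pac_bayes_lambda_optimal_general n hn Lhat C hL hC
end
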